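/- arXiv:1910.12928 — 9 statements merged into one kernel-verified Lean document; each statement's English description precedes it below -/
import Mathlib

section
/- For an odd prime p, the permutation of F_p given by x ↦ x^(p-2) is an odd permutation if and only if p ≡ 1 (mod 4). -/
theorem stmt_4 (p : ℕ) (hp : p.Prime) [NeZero p] (hodd : Odd p)
    (δ : Equiv.Perm (ZMod p)) (hδ : ∀ x, δ x = x ^ (p - 2)) :
    Equiv.Perm.sign δ = -1 ↔ p % 4 = 1 := by
  haveI : Fact p.Prime := ⟨hp⟩
  have hp2 : p ≠ 2 := by rintro rfl; exact absurd hodd (by decide)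
  have hp3 : 3 ≤ p := by have := hp.two_le; omega
  -- δ is inversion
  have hinv : ∀ x : ZMod p, δ x = x⁻¹ := by
    intro x
    rcases eq_or_ne x 0 with rfl | hx
    · rw [hδ, inv_zero, zero_pow]; omega
    · rw [hδ]
      have h1 : x ^ (p - 1) = 1 := ZMod.pow_card_sub_one_eq_one hx
      field_simp
      calc x ^ (p - 2) * x = x ^ (p - 2 + 1) := by ring
        _ = 1 := by rw [show p - 2 + 1 = p - 1 by omega, h1]
  rcases eq_or_lt_of_le hp3 with h3 | h5
  · -- p = 3 : δ is the identity
    have hδ1 : δ = 1 := by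
      ext x
      simp [hδ, show p - 2 = 1 by omega]
    rw [hδ1]
    simp only [Equiv.Perm.sign_one]
    constructor
    · intro h; exact absurd h (by decide)
    · intro h; omega
  · -- p ≥ 5 (since p odd, p ≠ 4)
    have hp5 : 5 ≤ p := by
      have := Nat.odd_iff.mp hodd; omega
    -- support
    have hsupp : δ.support = Finset.univ \ {0, 1, -1} := by
      ext x
      simp only [Equiv.Perm.mem_support, Finset.mem_sdiff, Finset.mem_univ, true_and,
        Finset.mem_insert, Finset.mem_singleton, hinv, not_or]
      constructor
      · intro h
        refine ⟨?_, ?_, ?_⟩ <;> rintro rfl <;> apply h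
        · exact inv_zero
        · exact inv_one
        · norm_num
      · rintro ⟨h0, h1, hm1⟩ heq
        have hx2 : x * x⁻¹ = x * x := by rw [heq]
        rw [mul_inv_cancel₀ h0] at hx2
        rcases mul_self_eq_one_iff.mp hx2.symm with rfl | rfl
        · exact h1 rfl
        · exact hm1 rfl
    have hdistinct : ({0, 1, -1} : Finset (ZMod p)).card = 3 := by
      have hc : (p : ℕ) = Fintype.card (ZMod p) := (ZMod.card p).symm
      have h01 : (0 : ZMod p) ≠ 1 := by
        intro h; exact one_ne_zero h.symm
      have h0m1 : (0 : ZMod p) ≠ -1 := by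
        intro h; apply one_ne_zero (α := ZMod p); rw [← neg_eq_zero, ← h]
      haveI : Fact (2 < p) := ⟨by omega⟩
      have h1m1 : (1 : ZMod p) ≠ -1 := (CharP.neg_one_ne_one (ZMod p) p).symm
      rw [Finset.card_insert_of_notMem (by simp [h01, h0m1]),
        Finset.card_insert_of_notMem (by simp [h1m1]), Finset.card_singleton]
    have hcard : δ.support.card = p - 3 := by
      rw [hsupp, Finset.card_sdiff_of_subset (Finset.subset_univ _), hdistinct,
        Finset.card_univ, ZMod.card]
    -- cycle type: all cycles have length 2
    have hδ2 : δ ^ 2 = 1 := by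
      ext x
      simp [pow_succ, hinv]
    have horder : orderOf δ ∣ 2 := orderOf_dvd_of_pow_eq_one hδ2
    have hct : ∀ n ∈ δ.cycleType, n = 2 := by
      intro n hn
      have h2le := Equiv.Perm.two_le_of_mem_cycleType hn
      have hdvd : n ∣ orderOf δ := by
        rw [← Equiv.Perm.lcm_cycleType]
        exact Multiset.dvd_lcm hn
      have := Nat.le_of_dvd (by norm_num) (hdvd.trans horder)
      omega
    set k := Multiset.card δ.cycleType with hk
    have hrep : δ.cycleType = Multiset.replicate k 2 :=
      Multiset.eq_replicate.mpr ⟨rfl, hct⟩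
    have hsum : δ.cycleType.sum = δ.support.card := Equiv.Perm.sum_cycleType δ
    have h2k : 2 * k = p - 3 := by
      rw [← hcard, ← hsum, hrep, Multiset.sum_replicate, smul_eq_mul, Nat.mul_comm]
    have hsign : Equiv.Perm.sign δ = (-1) ^ k := by
      rw [Equiv.Perm.sign_of_cycleType, hrep, Multiset.sum_replicate,
        Multiset.card_replicate, smul_eq_mul]
      rw [show k * 2 + k = 2 * k + k by ring, pow_add, pow_mul]
      norm_num
    rw [hsign]
    have hiff : ((-1 : ℤˣ) ^ k = -1) ↔ Odd k := by
      rcases Nat.even_or_odd k with he | ho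
      · rw [he.neg_one_pow]
        constructor
        · intro h; exact absurd h (by decide)
        · intro h; exact absurd h (Nat.not_odd_iff_even.mpr he)
      · rw [ho.neg_one_pow]; exact ⟨fun _ => ho, fun _ => rfl⟩
    rw [hiff, Nat.odd_iff]
    have := Nat.odd_iff.mp hodd
    omega
end

section
/- Let p be an odd prime with p ≡ 3 (mod 4), and let d be an odd positive integer coprime to p-1. Then the permutation of F_p given by x ↦ x^d is an even permutation. -/
/-!
The map `x ↦ x ^ d` fixes `0`, and on the cyclic group `𝔽_pˣ ≅ ℤ/(p - 1)` it becomes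
multiplication by the unit `d`. As `p - 1 = 2m` with `m` odd, `ℤ/(p - 1) ≅ ℤ/2 × ℤ/m`, and every
unit acts trivially on the `ℤ/2` factor, so the permutation is two copies of one permutation of
`ℤ/m`, hence even.
-/

open Equiv Equiv.Perm

theorem sign_unitsMulLeft_zmod_two_prod_eq_one {S : Type*} [Monoid S] [Fintype S] [DecidableEq S]
    (u : (ZMod 2 × S)ˣ) : sign (Units.mulLeft u) = 1 := by
  have hu₁ : (u : ZMod 2 × S).1 = 1 := by
    simpa using congrArg Units.val (Subsingleton.elim (Units.map (MonoidHom.fst _ S) u) 1)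
  have hsplit : Units.mulLeft u =
      prodCongrRight (fun _ => Units.mulLeft (Units.map (MonoidHom.snd _ _) u)) := by
    ext ⟨a, b⟩ <;> simp [hu₁]
  rw [hsplit, sign_prodCongrRight, Finset.prod_const, Finset.card_univ, ZMod.card, Int.units_sq]

theorem sign_unitsMulLeft_zmod_of_mod_four_eq_two {n : ℕ} [NeZero n] (hn : n % 4 = 2)
    (u : (ZMod n)ˣ) : sign (Units.mulLeft u) = 1 := by
  obtain ⟨m, rfl⟩ : ∃ m, n = 2 * m := ⟨n / 2, by omega⟩
  have hm : Nat.Coprime 2 m := Nat.coprime_two_left.mpr (Nat.odd_iff.mpr (by omega))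
  have : NeZero m := ⟨by omega⟩
  let e := ZMod.chineseRemainder hm
  rw [sign_eq_sign_of_equiv _ (Units.mulLeft (Units.map e.toMonoidHom u)) e.toEquiv
    fun x => map_mul e (u : ZMod (2 * m)) x]
  exact sign_unitsMulLeft_zmod_two_prod_eq_one _

theorem sign_powCoprime_eq_one {G : Type*} [Group G] [Fintype G] [DecidableEq G] [IsCyclic G]
    {d : ℕ} (hG : Nat.card G % 4 = 2) (hd : (Nat.card G).Coprime d) :
    sign (powCoprime hd) = 1 := by
  have : NeZero (Nat.card G) := ⟨by omega⟩
  let e := zmodCyclicMulEquiv (inferInstance : IsCyclic G)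
  let u : (ZMod (Nat.card G))ˣ := ZMod.unitOfCoprime d hd.symm
  rw [← sign_eq_sign_of_equiv (Units.mulLeft u) _ (Multiplicative.ofAdd.trans e.toEquiv)
    fun x => ?_]
  · exact sign_unitsMulLeft_zmod_of_mod_four_eq_two hG u
  · simp [u, ZMod.coe_unitOfCoprime, ← nsmul_eq_mul, ofAdd_nsmul]

theorem sign_eq_sign_powCoprime_units {G₀ : Type*} [GroupWithZero G₀] [Fintype G₀]
    [DecidableEq G₀] {d : ℕ} (hd₀ : d ≠ 0) (hd : (Nat.card G₀ˣ).Coprime d) (σ : Perm G₀)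
    (hσ : ∀ x, σ x = x ^ d) :
    sign σ = sign (powCoprime hd) := by
  have hσ₀ : ∀ x, σ x ≠ 0 ↔ x ≠ 0 := fun x => by simp [hσ, hd₀]
  rw [← sign_subtypePerm σ (p := (· ≠ 0)) hσ₀ fun x hx h0 => hx (by simp [h0, hσ, hd₀])]
  exact (sign_eq_sign_of_equiv _ _ unitsEquivNeZero fun u => by ext; simp [hσ]).symm

theorem stmt_6_general (p d : ℕ) (hp : p.Prime) [NeZero p] (hp4 : p % 4 = 3)
    (hdpos : 0 < d) (hcop : Nat.Coprime d (p - 1))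
    (σ : Equiv.Perm (ZMod p)) (hσ : ∀ x, σ x = x ^ d) :
    Equiv.Perm.sign σ = 1 := by
  have : Fact p.Prime := ⟨hp⟩
  have hcard : Nat.card (ZMod p)ˣ = p - 1 := by rw [Nat.card_eq_fintype_card, ZMod.card_units]
  have hd : (Nat.card (ZMod p)ˣ).Coprime d := hcard ▸ hcop.symm
  rw [sign_eq_sign_powCoprime_units hdpos.ne' hd σ hσ]
  exact sign_powCoprime_eq_one (by omega) hd

theorem stmt_6 (p d : ℕ) (hp : p.Prime) [NeZero p] (hp4 : p % 4 = 3)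
    (hdodd : Odd d) (hdpos : 0 < d) (hcop : Nat.Coprime d (p - 1))
    (σ : Equiv.Perm (ZMod p)) (hσ : ∀ x, σ x = x ^ d) :
    Equiv.Perm.sign σ = 1 :=
  stmt_6_general p d hp hp4 hdpos hcop σ hσ
end

section
/- Let p be a prime with p ≡ 3 (mod 4), and let d be coprime to p-1, c in F_p. Then the permutation of F_p given by x ↦ x^d + c is even. -/
/-!
Translation by `c` has order `p`, which is odd, so it is an even permutation; it remains to treat
`x ↦ x ^ d`, where `d` is odd because `p - 1` is even. Since `-1` is not a square mod `p`, the field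
splits as `{0} ⊔ S ⊔ -S` with `S` the nonzero squares. An odd power map fixes `0`, maps `S` to
itself and commutes with negation, so it acts by one and the same permutation `τ` on `S` and on
`-S`, and its sign is `sign τ ^ 2 = 1`.
-/

namespace Equiv.Perm

variable {α : Type*} [Fintype α] [DecidableEq α]

theorem sign_eq_one_of_pow_eq_one_of_odd {σ : Perm α} {n : ℕ} (hn : Odd n) (h : σ ^ n = 1) :
    sign σ = 1 := by
  have hpow : sign σ ^ n = 1 := by rw [← map_pow, h, map_one]
  rcases Int.units_eq_one_or (sign σ) with h1 | hneg
  · exact h1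
  · rw [hneg, hn.neg_one_pow] at hpow
    exact absurd hpow (by decide)

theorem sign_addRight_of_odd_card {G : Type*} [AddGroup G] [Fintype G] [DecidableEq G]
    (hG : Odd (Fintype.card G)) (c : G) : sign (Equiv.addRight c) = 1 :=
  sign_eq_one_of_pow_eq_one_of_odd hG (by rw [nsmul_addRight, card_nsmul_eq_zero, addRight_zero])

end Equiv.Perm

section NegOneNotSquare

variable {F : Type*} [Field F]

theorem two_ne_zero_of_not_isSquare_neg_one (hF : ¬IsSquare (-1 : F)) : (2 : F) ≠ 0 := by
  intro h2
  apply hF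
  rw [show (-1 : F) = 1 by linear_combination -h2]
  exact IsSquare.one

theorem not_isSquare_neg_of_isSquare (hF : ¬IsSquare (-1 : F)) {x : F} (hx : x ≠ 0)
    (hsq : IsSquare x) : ¬IsSquare (-x) := fun hneg => hF <| by
  simpa [neg_mul, mul_inv_cancel₀ hx] using hneg.mul hsq.inv

theorem isSquare_neg_of_not_isSquare [Fintype F] (hF : ¬IsSquare (-1 : F)) {x : F} (hx : x ≠ 0)
    (hsq : ¬IsSquare x) : IsSquare (-x) := by
  classical
  refine (quadraticChar_one_iff_isSquare (neg_ne_zero.mpr hx)).mp ?_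
  rw [neg_eq_neg_one_mul, map_mul, quadraticChar_neg_one_iff_not_isSquare.mpr hF,
    quadraticChar_neg_one_iff_not_isSquare.mpr hsq, neg_one_mul, neg_neg]

variable (F) in
abbrev NonzeroSquares := {x : F // IsSquare x ∧ x ≠ 0}

def signedSquare : Unit ⊕ NonzeroSquares F ⊕ NonzeroSquares F → F
  | .inl _ => 0
  | .inr (.inl s) => s.1
  | .inr (.inr s) => -s.1

theorem signedSquare_injective (hF : ¬IsSquare (-1 : F)) :
    Function.Injective (signedSquare (F := F)) := by
  rintro (_ | s | s) (_ | t | t) h <;> simp only [signedSquare] at h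
  · rfl
  · exact absurd h.symm t.2.2
  · exact absurd (neg_eq_zero.mp h.symm) t.2.2
  · exact absurd h s.2.2
  · rw [Subtype.ext h]
  · exact absurd (h ▸ s.2.1) (not_isSquare_neg_of_isSquare hF t.2.2 t.2.1)
  · exact absurd (neg_eq_zero.mp h) s.2.2
  · exact absurd (h ▸ t.2.1) (not_isSquare_neg_of_isSquare hF s.2.2 s.2.1)
  · rw [Subtype.ext (neg_injective h)]

theorem signedSquare_surjective [Fintype F] (hF : ¬IsSquare (-1 : F)) :
    Function.Surjective (signedSquare (F := F)) := by
  intro x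
  by_cases hx : x = 0
  · exact ⟨.inl (), hx.symm⟩
  by_cases hsq : IsSquare x
  · exact ⟨.inr (.inl ⟨x, hsq, hx⟩), rfl⟩
  · exact ⟨.inr (.inr ⟨-x, isSquare_neg_of_not_isSquare hF hx hsq, neg_ne_zero.mpr hx⟩),
      neg_neg x⟩

noncomputable def signedSquareEquiv [Fintype F] (hF : ¬IsSquare (-1 : F)) :
    Unit ⊕ NonzeroSquares F ⊕ NonzeroSquares F ≃ F :=
  Equiv.ofBijective signedSquare ⟨signedSquare_injective hF, signedSquare_surjective hF⟩

@[simp]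
theorem signedSquareEquiv_apply [Fintype F] (hF : ¬IsSquare (-1 : F))
    (y : Unit ⊕ NonzeroSquares F ⊕ NonzeroSquares F) : signedSquareEquiv hF y = signedSquare y :=
  rfl

theorem sign_eq_one_of_odd_of_map_isSquare [Fintype F] [DecidableEq F] (hF : ¬IsSquare (-1 : F))
    (σ : Equiv.Perm F) (hodd : Function.Odd σ) (hsq : ∀ x, IsSquare x → IsSquare (σ x)) :
    Equiv.Perm.sign σ = 1 := by
  have h0 : σ 0 = 0 := by
    have h := hodd 0
    rw [neg_zero, eq_neg_iff_add_eq_zero, ← two_mul] at h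
    exact (mul_eq_zero.mp h).resolve_left (two_ne_zero_of_not_isSquare_neg_one hF)
  have hS : ∀ x, IsSquare (σ x) ∧ σ x ≠ 0 ↔ IsSquare x ∧ x ≠ 0 := by
    intro x
    have hne : σ x ≠ 0 ↔ x ≠ 0 := σ.injective.ne_iff' h0
    refine ⟨fun ⟨hσx, hσx0⟩ => ⟨?_, hne.mp hσx0⟩, fun ⟨hx, hx0⟩ => ⟨hsq x hx, hne.mpr hx0⟩⟩
    by_contra hx
    have hneg := hsq _ (isSquare_neg_of_not_isSquare hF (hne.mp hσx0) hx)
    rw [hodd] at hneg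
    exact not_isSquare_neg_of_isSquare hF hσx0 hσx hneg
  set e := signedSquareEquiv hF
  set τ := σ.subtypePerm (p := fun x => IsSquare x ∧ x ≠ 0) hS
  have hσ : σ = e.permCongr (Equiv.sumCongr (Equiv.refl Unit) (Equiv.sumCongr τ τ)) := by
    ext x
    obtain ⟨y, rfl⟩ := e.surjective x
    rw [Equiv.permCongr_apply, Equiv.symm_apply_apply]
    rcases y with _ | s | s <;> simp [e, τ, signedSquare, h0, hodd _]
  rw [hσ, Equiv.Perm.sign_permCongr, Equiv.Perm.sign_sumCongr, Equiv.Perm.sign_sumCongr,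
    Equiv.Perm.sign_refl, one_mul, Int.units_mul_self]

end NegOneNotSquare

theorem stmt_7_general (p d : ℕ) (hp : p.Prime) [NeZero p] (hp4 : p % 4 = 3)
    (hcop : Nat.Coprime d (p - 1)) (c : ZMod p)
    (σ : Equiv.Perm (ZMod p)) (hσ : ∀ x, σ x = x ^ d + c) :
    Equiv.Perm.sign σ = 1 := by
  have : Fact p.Prime := ⟨hp⟩
  have hd : Odd d := Nat.coprime_two_right.mp (hcop.coprime_dvd_right (by omega))
  have hF : ¬IsSquare (-1 : ZMod p) := fun h => ZMod.exists_sq_eq_neg_one_iff.mp h hp4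
  set σ₀ := Equiv.addRight (-c) * σ
  have hσ₀ : ∀ x, σ₀ x = x ^ d := fun x => by simp [σ₀, hσ]
  have hsign : Equiv.Perm.sign σ₀ = Equiv.Perm.sign σ := by
    rw [Equiv.Perm.sign_mul, Equiv.Perm.sign_addRight_of_odd_card
      (by rw [ZMod.card]; exact Nat.odd_iff.mpr (by omega)), one_mul]
  rw [← hsign]
  exact sign_eq_one_of_odd_of_map_isSquare hF σ₀ (fun x => by simp only [hσ₀, hd.neg_pow])
    (fun x hx => by simpa only [hσ₀] using hx.pow d)

theorem stmt_7 (p d : ℕ) (hp : p.Prime) [NeZero p] (hp4 : p % 4 = 3)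
    (hd1 : 1 ≤ d) (hd2 : d < p - 1) (hcop : Nat.Coprime d (p - 1)) (c : ZMod p)
    (σ : Equiv.Perm (ZMod p)) (hσ : ∀ x, σ x = x ^ d + c) :
    Equiv.Perm.sign σ = 1 :=
  stmt_7_general p d hp hp4 hcop c σ hσ
end

section
/- For an odd prime p ≡ 3 (mod 4), if the cycle of a under the permutation x ↦ x^d (d odd, coprime to p-1) has length k, then the cycle of -a also has length k, and if a ≠ 0 then -a does not lie in the cycle of a. -/
theorem stmt_9 (p d : ℕ) (hp : p.Prime) (hp4 : p % 4 = 3)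
    (hdodd : Odd d) (hcop : Nat.Coprime d (p - 1))
    (σ : Equiv.Perm (ZMod p)) (hσ : ∀ x, σ x = x ^ d)
    (a : ZMod p) (k : ℕ) (hk : Function.minimalPeriod σ a = k) :
    Function.minimalPeriod σ (-a) = k ∧
      (a ≠ 0 → ∀ n : ℕ, σ^[n] a ≠ -a) := by
  haveI : Fact p.Prime := ⟨hp⟩
  have hneg : ∀ n (x : ZMod p), σ^[n] (-x) = -(σ^[n] x) := by
    intro n
    induction n with
    | zero => intro x; simp
    | succ n ih =>
      intro x
      rw [Function.iterate_succ_apply, Function.iterate_succ_apply, hσ,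
        hdodd.neg_pow, ← hσ, ih]
  have hiter : ∀ n (x : ZMod p), σ^[n] x = x ^ (d ^ n) := by
    intro n
    induction n with
    | zero => intro x; simp
    | succ n ih =>
      intro x
      rw [Function.iterate_succ_apply, hσ, ih, ← pow_mul, ← pow_succ']
  have hiff : ∀ n, Function.IsPeriodicPt σ n (-a) ↔ Function.IsPeriodicPt σ n a := by
    intro n
    unfold Function.IsPeriodicPt Function.IsFixedPt
    rw [hneg]
    constructor
    · intro h; exact neg_injective h
    · intro h; rw [h]
  have hperN : ∀ x : ZMod p, Function.IsPeriodicPt σ (orderOf σ) x := by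
    intro x
    have : (σ ^ orderOf σ) x = x := by rw [pow_orderOf_eq_one]; rfl
    simpa [Function.IsPeriodicPt, Function.IsFixedPt, Equiv.Perm.iterate_eq_pow] using this
  have hNpos : 0 < orderOf σ := orderOf_pos σ
  have hpos1 : 0 < Function.minimalPeriod σ a := (hperN a).minimalPeriod_pos hNpos
  have hpos2 : 0 < Function.minimalPeriod σ (-a) := (hperN (-a)).minimalPeriod_pos hNpos
  constructor
  · rw [← hk]
    apply le_antisymm
    · exact ((hiff _).mpr (Function.isPeriodicPt_minimalPeriod σ a)).minimalPeriod_le hpos1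
    · exact ((hiff _).mp (Function.isPeriodicPt_minimalPeriod σ (-a))).minimalPeriod_le hpos2
  · intro ha n h
    rw [hiter] at h
    obtain ⟨m, hm⟩ := hdodd.pow (n := n)
    rw [hm, pow_succ] at h
    have h2 : a ^ (2 * m) = -1 := by
      exact mul_right_cancel₀ ha (h.trans (show (-a) = (-1)*a by ring))
    have hsq : IsSquare (-1 : ZMod p) := by
      refine ⟨a ^ m, ?_⟩
      rw [← h2, two_mul, pow_add]
    rw [ZMod.exists_sq_eq_neg_one_iff] at hsq
    exact hsq hp4
end

section
/- Let p be an odd prime and σ the permutation of F_p given by x ↦ x + 1. For two exponents d_i, d_j, each coprime to p-1 with 1 ≤ d_i, d_j < p-1, if there exists c in F_p such that x^{d_i} + c = x^{d_j} for all x in F_p, then d_i = d_j and c = 0. -/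
theorem stmt_10 (p di dj : ℕ) (hp : p.Prime) (hodd : Odd p)
    (hi1 : 1 ≤ di) (hi2 : di < p - 1) (hicop : Nat.Coprime di (p - 1))
    (hj1 : 1 ≤ dj) (hj2 : dj < p - 1) (hjcop : Nat.Coprime dj (p - 1))
    (c : ZMod p) (h : ∀ x : ZMod p, x ^ di + c = x ^ dj) :
    di = dj ∧ c = 0 := by
  have hp' : Fact p.Prime := ⟨hp⟩
  have hc : c = 0 := by
    have h0 := h 0
    simpa [zero_pow (by omega : di ≠ 0), zero_pow (by omega : dj ≠ 0)] using h0
  subst hc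
  refine ⟨?_, rfl⟩
  obtain ⟨g, hg⟩ := IsCyclic.exists_generator (α := (ZMod p)ˣ)
  have horder : orderOf g = p - 1 := by
    rw [orderOf_eq_card_of_forall_mem_zpowers hg, Nat.card_eq_fintype_card,
      ZMod.card_units_eq_totient, Nat.totient_prime hp]
  have hgp : g ^ di = g ^ dj := by
    have hx := h (g : ZMod p)
    ext
    push_cast
    simpa using hx
  have hmod := pow_eq_pow_iff_modEq.mp hgp
  rw [horder] at hmod
  have := (Nat.ModEq.eq_of_lt_of_lt hmod hi2 hj2)
  exact this
end

section
/- Let p ≥ 5 be prime. Let σ be the permutation of F_p given by x ↦ x + 1 and δ the permutation given by x ↦ x^(p-2). Then σ^3 ∘ δ ∘ σ^{-1} ∘ δ ∘ (σ ∘ δ)^3 ∘ σ^{-1} ∘ δ equals the permutation (0 1)(2 3), i.e., it swaps 0 with 1, swaps 2 with 3, and fixes all other elements of F_p. -/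
/-! On `F ∪ {∞}` both `x ↦ x + 1` and `x ↦ x⁻¹` are Möbius transformations, and the word
composes to the identity of the projective line. On `F` the inversion differs from the Möbius one
only by sending `0 ↦ 0` instead of `0 ↦ ∞`, so the word fixes every point whose orbit avoids `0`;
the orbits of `0, 1, 2, 3` are followed by hand. Over `ZMod p`, the map `x ↦ x ^ (p - 2)` is
inversion by Fermat's little theorem. -/

theorem FiniteField.pow_card_sub_two_eq_inv {K : Type*} [GroupWithZero K] [Fintype K]
    (hK : 2 < Fintype.card K) (a : K) : a ^ (Fintype.card K - 2) = a⁻¹ := by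
  rcases eq_or_ne a 0 with rfl | ha
  · rw [inv_zero, zero_pow (by omega)]
  · refine eq_inv_of_mul_eq_one_left ?_
    rw [← pow_succ, ← FiniteField.pow_card_sub_one_eq_one a ha]
    congr 1
    omega

theorem ZMod.natCast_ne_zero_of_pos_of_lt {p n : ℕ} (hn : 0 < n) (hnp : n < p) :
    (n : ZMod p) ≠ 0 := by
  rw [Ne, ZMod.natCast_eq_zero_iff]
  exact Nat.not_dvd_of_pos_of_lt hn hnp

section Field

variable {F : Type*} [Field F]

theorem inv_shift_chain_eq_self {x : F} (hx0 : x ≠ 0) (hx1 : x ≠ 1) (hx2 : x ≠ 2) (hx3 : x ≠ 3) :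
    (((((x⁻¹ - 1)⁻¹ + 1)⁻¹ + 1)⁻¹ + 1)⁻¹ - 1)⁻¹ + 1 + 1 + 1 = x := by
  have h1x : 1 - x ≠ 0 := sub_ne_zero.mpr (Ne.symm hx1)
  have h2x : 2 - x ≠ 0 := sub_ne_zero.mpr (Ne.symm hx2)
  have h3x : 3 - x ≠ 0 := sub_ne_zero.mpr (Ne.symm hx3)
  have e1 : (x⁻¹ - 1)⁻¹ + 1 = (1 - x)⁻¹ := by field_simp; ring
  have e2 : ((1 - x)⁻¹)⁻¹ + 1 = 2 - x := by rw [inv_inv]; ring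
  have e3 : (2 - x)⁻¹ + 1 = (3 - x) / (2 - x) := by field_simp; ring
  have e4 : ((3 - x) / (2 - x))⁻¹ - 1 = -(3 - x)⁻¹ := by rw [inv_div]; field_simp; ring
  rw [e1, e2, e3, e4, inv_neg, inv_inv]
  ring

theorem addRight_one_inv_word_eq_swap_mul_swap [DecidableEq F] (h2 : (2 : F) ≠ 0)
    (h3 : (3 : F) ≠ 0) :
    Equiv.addRight (1 : F) ^ 3 * Equiv.inv F * (Equiv.addRight 1)⁻¹ * Equiv.inv F *
        (Equiv.addRight 1 * Equiv.inv F) ^ 3 * (Equiv.addRight 1)⁻¹ * Equiv.inv F =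
      Equiv.swap (0 : F) 1 * Equiv.swap (2 : F) 3 := by
  have h12 : (1 : F) ≠ 2 := fun h => one_ne_zero (by linear_combination -h)
  have h13 : (1 : F) ≠ 3 := fun h => h2 (by linear_combination -h)
  have half_sub_one : (2 : F)⁻¹ - 1 = -2⁻¹ := by field_simp; ring
  have half_add_one : ((2 : F)⁻¹ + 1)⁻¹ - 1 = -3⁻¹ := by
    rw [show (2 : F)⁻¹ + 1 = 3 / 2 by field_simp; norm_num, inv_div]; field_simp; ring
  have third_sub_one : ((3 : F)⁻¹ - 1)⁻¹ + 1 = -2⁻¹ := by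
    rw [show (3 : F)⁻¹ - 1 = -(2 / 3) by field_simp; norm_num, inv_neg, inv_div]; field_simp; ring
  ext x
  simp only [Equiv.Perm.mul_apply, pow_succ, pow_zero, one_mul, Equiv.inv_apply,
    Equiv.coe_addRight, Equiv.Perm.inv_def, Equiv.addRight_symm, ← sub_eq_add_neg]
  rcases eq_or_ne x 0 with rfl | hx0
  · rw [Equiv.swap_apply_of_ne_of_ne h2.symm h3.symm, Equiv.swap_apply_left]
    norm_num
    rw [half_sub_one, inv_neg, inv_inv]
    ring
  rcases eq_or_ne x 1 with rfl | hx1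
  · rw [Equiv.swap_apply_of_ne_of_ne h12 h13, Equiv.swap_apply_right]
    norm_num
    rw [half_add_one, inv_neg, inv_inv]
    ring
  rcases eq_or_ne x 2 with rfl | hx2
  · rw [Equiv.swap_apply_left, Equiv.swap_apply_of_ne_of_ne h3 h13.symm]
    norm_num [half_sub_one]
  rcases eq_or_ne x 3 with rfl | hx3
  · rw [Equiv.swap_apply_right, Equiv.swap_apply_of_ne_of_ne h2 h12.symm]
    norm_num [third_sub_one]
  rw [Equiv.swap_apply_of_ne_of_ne hx2 hx3, Equiv.swap_apply_of_ne_of_ne hx0 hx1]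
  exact inv_shift_chain_eq_self hx0 hx1 hx2 hx3

end Field

theorem stmt_11 (p : ℕ) (hp : p.Prime) (hp5 : 5 ≤ p)
    (σ δ : Equiv.Perm (ZMod p)) (hσ : ∀ x, σ x = x + 1)
    (hδ : ∀ x, δ x = x ^ (p - 2)) :
    σ ^ 3 * δ * σ⁻¹ * δ * (σ * δ) ^ 3 * σ⁻¹ * δ =
      Equiv.swap (0 : ZMod p) 1 * Equiv.swap (2 : ZMod p) 3 := by
  have : Fact p.Prime := ⟨hp⟩
  obtain rfl : σ = Equiv.addRight 1 := Equiv.ext hσ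
  obtain rfl : δ = Equiv.inv (ZMod p) := Equiv.ext fun x => by
    have := FiniteField.pow_card_sub_two_eq_inv (K := ZMod p) (by rw [ZMod.card]; omega) x
    rwa [ZMod.card, ← hδ] at this
  exact addRight_one_inv_word_eq_swap_mul_swap
    (by exact_mod_cast ZMod.natCast_ne_zero_of_pos_of_lt (n := 2) (by norm_num) (by omega))
    (by exact_mod_cast ZMod.natCast_ne_zero_of_pos_of_lt (n := 3) (by norm_num) (by omega))
end

section
/- Let p be an odd prime, σ the permutation x ↦ x+1 and δ the permutation x ↦ x^(p-2) of F_p. If p ≡ 3 (mod 4), then the subgroup of the symmetric group on F_p generated by σ and δ is the alternating group on F_p. -/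
/-!
Both generators are even: `σ ^ p = 1` with `p` odd, and `δ` is inversion, an involution whose
fixed points are `0, 1, -1`, hence a product of `(p - 3) / 2` transpositions, an even number
exactly when `p ≡ 3 (mod 4)`. Conversely, `⟨σ, δ⟩` is transitive of prime degree, hence
primitive, and it contains the 3-cycle `(δσδσ⁻²)² = (0 1 2)`; by Jordan's theorem a primitive
group containing a 3-cycle contains the alternating group.
-/

open Equiv Equiv.Perm MulAction

theorem Equiv.Perm.sign_eq_one_of_pow_eq_one_of_odd_s13 {α : Type*} [Fintype α] [DecidableEq α]
    {f : Perm α} {n : ℕ} (hn : Odd n) (hf : f ^ n = 1) : sign f = 1 := by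
  rw [← pow_one (sign f), ← Nat.odd_iff.mp hn, ← Int.units_pow_eq_pow_mod_two, ← map_pow, hf,
    map_one]

theorem ZMod.pow_sub_two_eq_inv {p : ℕ} [Fact p.Prime] (hp : p ≠ 2) (x : ZMod p) :
    x ^ (p - 2) = x⁻¹ := by
  have hp3 : 3 ≤ p := (Fact.out : p.Prime).two_le.lt_of_ne' hp
  rcases eq_or_ne x 0 with rfl | hx
  · rw [zero_pow (by omega), inv_zero]
  · refine eq_inv_of_mul_eq_one_left ?_
    rw [← pow_succ, show p - 2 + 1 = p - 1 by omega, ZMod.pow_card_sub_one_eq_one hx]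

section Translation

variable {n : ℕ} [NeZero n]

theorem ZMod.sign_addRight_one (hn : Odd n) : sign (Equiv.addRight (1 : ZMod n)) = 1 :=
  sign_eq_one_of_pow_eq_one_of_odd_s13 hn (by simp)

theorem ZMod.isPretransitive_of_addRight_one_mem {G : Subgroup (Perm (ZMod n))}
    (h : Equiv.addRight 1 ∈ G) : IsPretransitive G (ZMod n) := by
  refine ⟨fun a b => ⟨⟨Equiv.addRight (b - a), ?_⟩, by simp [Subgroup.smul_def]⟩⟩
  simpa using G.pow_mem h (b - a).val

end Translation

section FieldPerm

variable {K : Type*} [Field K] [DecidableEq K]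

theorem card_fixedPoints_equivInv [Fintype K] (h2 : (2 : K) ≠ 0) :
    Fintype.card (Function.fixedPoints (Equiv.inv K)) = 3 := by
  have hfix : Function.fixedPoints (Equiv.inv K) = {-1, 0, 1} := by
    ext x
    simp [Function.IsFixedPt, inv_eq_self₀]
  have h : (-1 : K) ≠ 1 := fun h => h2 (by linear_combination -h)
  rw [← Nat.card_eq_fintype_card, hfix, Nat.card_coe_set_eq, Set.ncard_eq_three]
  exact ⟨-1, 0, 1, by simp, h, zero_ne_one, rfl⟩

theorem sign_equivInv [Fintype K] (h2 : (2 : K) ≠ 0) :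
    sign (Equiv.inv K) = (-1) ^ ((Fintype.card K - 3) / 2) := by
  rw [sign_of_pow_two_eq_one (by ext; simp [sq]), card_fixedPoints_equivInv h2]

theorem sq_inv_mul_addRight_one_mul_inv_mul_addRight_neg_two (h2 : (2 : K) ≠ 0) :
    (Equiv.inv K * Equiv.addRight 1 * Equiv.inv K * Equiv.addRight (-2)) ^ 2 =
      swap 0 2 * swap 0 1 := by
  set g := Equiv.inv K * Equiv.addRight 1 * Equiv.inv K * Equiv.addRight (-2)
  have h21 : (2 : K) ≠ 1 := fun h => one_ne_zero (by linear_combination h)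
  -- Off `2`, where the junk value `0⁻¹ = 0` enters, `g` is the Möbius map of `!![1, -2; 1, -1]`,
  -- an involution of the projective line because the trace vanishes.
  have hmoebius : ∀ x, x ≠ 2 → g x = (x - 2) / (x - 1) := by
    intro x hx
    have hx' : x - 2 ≠ 0 := sub_ne_zero.mpr hx
    simp only [g, Perm.mul_apply, inv_apply, coe_addRight, ← sub_eq_add_neg]
    field_simp
    ring
  have hg2 : g 2 = 1 := by simp [g]
  clear_value g
  have hg0 : g 0 = 2 := by
    rw [hmoebius 0 h2.symm]; field_simp; ring
  have hg1 : g 1 = 0 := by simp [hmoebius 1 h21.symm]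
  ext x
  rw [sq, Perm.mul_apply, Perm.mul_apply]
  rcases eq_or_ne x 0 with rfl | hx0
  · simp [hg0, hg2, swap_apply_of_ne_of_ne one_ne_zero h21.symm]
  rcases eq_or_ne x 1 with rfl | hx1
  · simp [hg1, hg0]
  rcases eq_or_ne x 2 with rfl | hx2
  · simp [hg2, hg1, swap_apply_of_ne_of_ne h2 h21]
  have hx1' : x - 1 ≠ 0 := sub_ne_zero.mpr hx1
  have hgx : g x ≠ 2 := by
    rw [hmoebius x hx2, Ne, div_eq_iff hx1']
    exact fun h => hx0 (by linear_combination -h)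
  rw [hmoebius _ hgx, hmoebius x hx2, swap_apply_of_ne_of_ne hx0 hx1,
    swap_apply_of_ne_of_ne hx0 hx2]
  field_simp
  ring

end FieldPerm

theorem stmt_13 (p : ℕ) (hp : p.Prime) [NeZero p] (hp4 : p % 4 = 3)
    (σ δ : Equiv.Perm (ZMod p)) (hσ : ∀ x, σ x = x + 1)
    (hδ : ∀ x, δ x = x ^ (p - 2)) :
    Subgroup.closure {σ, δ} = alternatingGroup (ZMod p) := by
  have := Fact.mk hp
  have hp2 : p ≠ 2 := by omega
  have h2 : (2 : ZMod p) ≠ 0 := by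
    rw [← Nat.cast_ofNat, Ne, ZMod.natCast_eq_zero_iff]
    exact fun h => hp2 ((Nat.prime_dvd_prime_iff_eq hp Nat.prime_two).mp h)
  obtain rfl : σ = Equiv.addRight 1 := Equiv.ext hσ
  obtain rfl : δ = Equiv.inv (ZMod p) :=
    Equiv.ext fun x => (hδ x).trans (ZMod.pow_sub_two_eq_inv hp2 x)
  set H := Subgroup.closure {Equiv.addRight (1 : ZMod p), Equiv.inv (ZMod p)}
  have hσH : Equiv.addRight 1 ∈ H := Subgroup.subset_closure (by simp)
  have hδH : Equiv.inv (ZMod p) ∈ H := Subgroup.subset_closure (by simp)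
  refine le_antisymm ((Subgroup.closure_le _).mpr ?_) ?_
  · rintro _ (rfl | rfl)
    · exact ZMod.sign_addRight_one (hp.odd_of_ne_two hp2)
    · rw [SetLike.mem_coe, mem_alternatingGroup, sign_equivInv h2, ZMod.card]
      exact Even.neg_one_pow (by rw [Nat.even_iff]; omega)
  · have := ZMod.isPretransitive_of_addRight_one_mem hσH
    refine alternatingGroup_le_of_isPreprimitive_of_isThreeCycle_mem
      (.of_prime_card (by rwa [Nat.card_zmod])) (isThreeCycle_swap_mul_swap_same h2.symm
        zero_ne_one fun h => one_ne_zero (by linear_combination h)) ?_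
    rw [← sq_inv_mul_addRight_one_mul_inv_mul_addRight_neg_two h2]
    have hneg2 : Equiv.addRight (-2 : ZMod p) ∈ H := by simpa using H.zpow_mem hσH (-2)
    exact H.pow_mem (H.mul_mem (H.mul_mem (H.mul_mem hδH hσH) hδH) hneg2) 2
end

section
/- Let p be an odd prime. The subgroup of the symmetric group on F_p generated by the permutations x ↦ x + 1, x ↦ -x, and x ↦ x^(p-2) is the full symmetric group on F_p. -/
/-!
On `ZMod p` the translation `x ↦ x + 1` is a `p`-cycle, and together with the adjacent
transposition `(0 1)` it generates the symmetric group. Since `x ^ (p - 2)` is inversion, that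
transposition is the word `σ ν δ σ δ σ⁻¹ δ` in the three given permutations.
-/

open Equiv Equiv.Perm

namespace ZMod

variable {n : ℕ} [NeZero n] [Nontrivial (ZMod n)]

theorem isCycle_addRight_one : (Equiv.addRight (1 : ZMod n)).IsCycle :=
  ⟨0, by simp, fun y _ => ⟨y.val, by simp⟩⟩

theorem support_addRight_one : (Equiv.addRight (1 : ZMod n)).support = Finset.univ := by
  ext x
  simp

end ZMod

theorem FiniteField.perm_eq_inv_of_apply_eq_pow_card_sub_two {K : Type*} [Field K] [Fintype K]
    (δ : Perm K) (hδ : ∀ x, δ x = x ^ (Fintype.card K - 2)) : δ = Equiv.inv K := by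
  have h_units : ∀ x : K, x ≠ 0 → δ x = x⁻¹ := by
    intro x hx
    have h_exp : Fintype.card K - 2 + 1 = Fintype.card K - 1 := by
      have := Fintype.one_lt_card (α := K); omega
    rw [hδ]
    refine eq_inv_of_mul_eq_one_left ?_
    rw [← pow_succ, h_exp, FiniteField.pow_card_sub_one_eq_one x hx]
  ext x
  rcases eq_or_ne x 0 with rfl | hx
  -- `x ^ (q - 2)` is `1` at `0` when `q = 2`, so `δ 0 = 0` comes from injectivity instead.
  · show δ 0 = 0⁻¹
    by_contra hy
    rw [inv_zero] at hy
    have : δ (δ 0)⁻¹ = δ 0 := by rw [h_units _ (inv_ne_zero hy), inv_inv]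
    exact hy (inv_eq_zero.1 (δ.injective this))
  · exact h_units x hx

theorem addRight_neg_inv_word_eq_swap_zero_one {K : Type*} [Field K] [DecidableEq K] :
    Equiv.addRight 1 * Equiv.neg K * Equiv.inv K * Equiv.addRight 1 * Equiv.inv K *
      (Equiv.addRight 1)⁻¹ * Equiv.inv K = swap 0 1 := by
  -- For `x ≠ 0, 1`: `x ↦ x⁻¹ ↦ x⁻¹ - 1 ↦ x / (1 - x) ↦ 1 / (1 - x) ↦ 1 - x ↦ x - 1 ↦ x`.
  ext x
  simp only [Perm.mul_apply, coe_addRight, Equiv.neg_apply, Equiv.inv_apply, neg_addRight,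
    ← sub_eq_add_neg]
  rcases eq_or_ne x 0 with rfl | hx0
  · simp
  rcases eq_or_ne x 1 with rfl | hx1
  · simp
  have h1x : 1 - x ≠ 0 := sub_ne_zero.2 hx1.symm
  have : (x⁻¹ - 1)⁻¹ + 1 = (1 - x)⁻¹ := by
    rw [show x⁻¹ - 1 = (1 - x) / x by field_simp, inv_div]
    field_simp
    ring
  rw [swap_apply_of_ne_of_ne hx0 hx1, this, inv_inv]
  ring

theorem stmt_14_general (p : ℕ) (hp : p.Prime)
    (σ ν δ : Equiv.Perm (ZMod p)) (hσ : ∀ x, σ x = x + 1)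
    (hν : ∀ x, ν x = -x) (hδ : ∀ x, δ x = x ^ (p - 2)) :
    Subgroup.closure {σ, ν, δ} = (⊤ : Subgroup (Equiv.Perm (ZMod p))) := by
  have : Fact p.Prime := ⟨hp⟩
  obtain rfl : σ = Equiv.addRight 1 := Equiv.ext hσ
  obtain rfl : ν = Equiv.neg _ := Equiv.ext hν
  obtain rfl : δ = Equiv.inv _ :=
    FiniteField.perm_eq_inv_of_apply_eq_pow_card_sub_two δ (by rwa [ZMod.card])
  have h_top := closure_cycle_adjacent_swap ZMod.isCycle_addRight_one ZMod.support_addRight_one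
    (0 : ZMod p)
  simp only [coe_addRight, zero_add] at h_top
  rw [← addRight_neg_inv_word_eq_swap_zero_one] at h_top
  set H := Subgroup.closure ({Equiv.addRight 1, Equiv.neg _, Equiv.inv _} : Set (Perm (ZMod p)))
  have h_add : Equiv.addRight 1 ∈ H := Subgroup.subset_closure (by simp)
  have h_neg : Equiv.neg _ ∈ H := Subgroup.subset_closure (by simp)
  have h_inv : Equiv.inv _ ∈ H := Subgroup.subset_closure (by simp)
  rw [eq_top_iff, ← h_top, Subgroup.closure_le, Set.insert_subset_iff, Set.singleton_subset_iff]
  exact ⟨h_add, mul_mem (mul_mem (mul_mem (mul_mem (mul_mem (mul_mem h_add h_neg) h_inv) h_add)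
    h_inv) (inv_mem h_add)) h_inv⟩

theorem stmt_14 (p : ℕ) (hp : p.Prime) (hodd : Odd p)
    (σ ν δ : Equiv.Perm (ZMod p)) (hσ : ∀ x, σ x = x + 1)
    (hν : ∀ x, ν x = -x) (hδ : ∀ x, δ x = x ^ (p - 2)) :
    Subgroup.closure {σ, ν, δ} = (⊤ : Subgroup (Equiv.Perm (ZMod p))) :=
  stmt_14_general p hp σ ν δ hσ hν hδ
end

section
/- Let p be an odd prime and α in F_p such that α² + 4 ≠ 0 in F_p. Work in a field extension K of F_p containing a square root s of α² + 4, and set z₊ = (-α + s)/2, z₋ = (-α - s)/2. Then z₊ ≠ z₋, z₊·z₋ = -1, and for all n, m with n > m ≥ 1, if F_n(α)·F_{m-1}(α) = F_{n-1}(α)·F_m(α) in F_p then (z₊/z₋)^{n-m} = 1 in K, where F_k denotes the Fibonacci polynomial sequence at α. -/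
/-!
Over `K`, `a := -z₋` and `b := -z₊` are the two roots of `X² - αX - 1`, so Binet's formula
`(a - b) F_k = a^k - b^k` holds with `a - b = s ≠ 0` and `ab = -1`. Substituting it into the
Casoratian gives `s (F_n F_{m-1} - F_{n-1} F_m) = (-1)^{m-1} (b^{n-m} - a^{n-m})`, so its vanishing
forces `a^{n-m} = b^{n-m}`, i.e. `(z₊/z₋)^{n-m} = 1`.
-/

section Binet

variable {R : Type*} [CommRing R] {c a b : R} {G : ℕ → R}

theorem sub_mul_eq_pow_sub_pow_of_linearRecurrence (ha : a ^ 2 = c * a + 1)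
    (hb : b ^ 2 = c * b + 1) (h0 : G 0 = 0) (h1 : G 1 = 1)
    (hrec : ∀ k, G (k + 2) = c * G (k + 1) + G k) (k : ℕ) :
    (a - b) * G k = a ^ k - b ^ k := by
  induction k using Nat.twoStepInduction with
  | zero => simp [h0]
  | one => simp [h1]
  | more k ih ih' =>
    rw [hrec]
    linear_combination c * ih' + ih - a ^ k * ha + b ^ k * hb

theorem pow_sub_pow_casoratian (a b : R) (i l : ℕ) :
    (a ^ (i + l + 1) - b ^ (i + l + 1)) * (a ^ i - b ^ i) -
        (a ^ (i + l) - b ^ (i + l)) * (a ^ (i + 1) - b ^ (i + 1)) =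
      (a - b) * (a * b) ^ i * (b ^ l - a ^ l) := by
  ring

end Binet

section QuadraticRoots

variable {K : Type*} [Field K] {c s : K}

theorem add_div_two_sq_eq (h2 : (2 : K) ≠ 0) (hs : s ^ 2 = c ^ 2 + 4) :
    ((c + s) / 2) ^ 2 = c * ((c + s) / 2) + 1 := by
  field_simp
  linear_combination hs

theorem add_div_two_mul_sub_div_two (h2 : (2 : K) ≠ 0) (hs : s ^ 2 = c ^ 2 + 4) :
    (c + s) / 2 * ((c - s) / 2) = -1 := by
  field_simp
  linear_combination -hs

end QuadraticRoots

theorem ZMod.two_ne_zero_of_odd {p : ℕ} [Fact p.Prime] (hodd : Odd p) : (2 : ZMod p) ≠ 0 := by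
  have hp2 : p ≠ 2 := by rintro rfl; exact absurd hodd (by decide)
  exact Ring.two_ne_zero (by rwa [ZMod.ringChar_zmod_n])

theorem pow_eq_pow_of_casoratian_eq_zero {K : Type*} [Field K] {c a b : K} {G : ℕ → K}
    (ha : a ^ 2 = c * a + 1) (hb : b ^ 2 = c * b + 1) (hab : a ≠ b) (hmul : a * b = -1)
    (h0 : G 0 = 0) (h1 : G 1 = 1) (hrec : ∀ k, G (k + 2) = c * G (k + 1) + G k) {i l : ℕ}
    (hG : G (i + l + 1) * G i = G (i + l) * G (i + 1)) : a ^ l = b ^ l := by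
  have binet := sub_mul_eq_pow_sub_pow_of_linearRecurrence ha hb h0 h1 hrec
  have hsub : a - b ≠ 0 := sub_ne_zero.mpr hab
  have hzero : (a - b) * (a * b) ^ i * (b ^ l - a ^ l) = 0 := by
    rw [← pow_sub_pow_casoratian, ← binet, ← binet, ← binet, ← binet]
    linear_combination (a - b) ^ 2 * hG
  have hunit : (a - b) * (a * b) ^ i ≠ 0 := by
    rw [hmul]
    exact mul_ne_zero hsub (pow_ne_zero _ (neg_ne_zero.mpr one_ne_zero))
  exact (sub_eq_zero.mp ((mul_eq_zero.mp hzero).resolve_left hunit)).symm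

theorem stmt_18 (p : ℕ) (hp : p.Prime) (hodd : Odd p) (α : ZMod p)
    (hα : α ^ 2 + 4 ≠ 0)
    (K : Type*) [Field K] [Algebra (ZMod p) K]
    (s : K) (hs : s ^ 2 = algebraMap (ZMod p) K (α ^ 2 + 4))
    (zp zm : K) (hzp : zp = (-(algebraMap (ZMod p) K α) + s) / 2)
    (hzm : zm = (-(algebraMap (ZMod p) K α) - s) / 2)
    (F : ℕ → ZMod p) (hF0 : F 0 = 0) (hF1 : F 1 = 1)
    (hFrec : ∀ k, F (k + 2) = α * F (k + 1) + F k) :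
    zp ≠ zm ∧ zp * zm = -1 ∧
      ∀ n m : ℕ, m < n → 1 ≤ m →
        F n * F (m - 1) = F (n - 1) * F m → (zp / zm) ^ (n - m) = 1 := by
  have := Fact.mk hp
  set g := algebraMap (ZMod p) K
  have h2 : (2 : K) ≠ 0 := by
    rw [← map_ofNat g 2]
    exact (map_ne_zero g).mpr (ZMod.two_ne_zero_of_odd hodd)
  have hs0 : s ≠ 0 := by
    rintro rfl
    exact (map_ne_zero g).mpr hα (by rw [← hs]; ring)
  have hs' : s ^ 2 = g α ^ 2 + 4 := by rw [hs, map_add, map_pow, map_ofNat]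
  set a := (g α + s) / 2 with ha
  set b := (g α - s) / 2 with hb
  have hab : a * b = -1 := add_div_two_mul_sub_div_two h2 hs'
  have hne : a ≠ b := by
    have hsub : a - b = s := by rw [ha, hb]; field_simp; ring
    exact fun h => hs0 (by rw [← hsub, h, sub_self])
  obtain rfl : zp = -b := by rw [hzp]; ring
  obtain rfl : zm = -a := by rw [hzm]; ring
  refine ⟨neg_injective.ne hne.symm, by rw [neg_mul_neg, mul_comm, hab], fun n m hmn hm hF => ?_⟩
  obtain ⟨i, rfl⟩ : ∃ i, m = i + 1 := ⟨m - 1, by omega⟩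
  obtain ⟨l, rfl⟩ : ∃ l, n = i + l + 1 + 1 := ⟨n - i - 2, by omega⟩
  have hG : g (F (i + (l + 1) + 1)) * g (F i) = g (F (i + (l + 1))) * g (F (i + 1)) := by
    simpa [← map_mul, ← add_assoc] using congrArg g hF
  have hpow : a ^ (l + 1) = b ^ (l + 1) :=
    pow_eq_pow_of_casoratian_eq_zero (G := fun k => g (F k)) (add_div_two_sq_eq h2 hs')
      (by rw [hb, sub_eq_add_neg]; exact add_div_two_sq_eq h2 (by rw [neg_sq, hs']))
      hne hab (by simp [hF0]) (by simp [hF1]) (fun k => by simp [hFrec]) hG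
  have ha0 : a ≠ 0 := left_ne_zero_of_mul (b := b) (by rw [hab]; simp)
  rw [show i + l + 1 + 1 - (i + 1) = l + 1 by omega, neg_div_neg_eq, div_pow, ← hpow,
    div_self (pow_ne_zero _ ha0)]
end
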